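/- (Theorem 3.21) Let α : ℝ → ℝ³ be a unit-speed spacelike Frenet curve with timelike principal normal, with frame (T, N, B) and curvatures κ, τ, and let ω ∈ ℝ. Define β(s) = α(s) + (ω − s)·T(s). Then β′(s) = (ω − s)·κ(s)·N(s) for all s. Moreover, on any interval I on which ω − s > 0, the curve β is timelike, and there exists a fixed nonzero vector d ∈ ℝ³ such that s ↦ η(β′(s)/‖β′(s)‖, d) is constant on I if and only if there exists a fixed nonzero vector d ∈ ℝ³ such that s ↦ η(N(s), d) is constant on I; that is, β is a timelike general helix if and only if α is a spacelike slant helix. -/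

import Mathlib

noncomputable section

/-- Lorentzian inner product on Minkowski 3-space. -/
def eta (u v : Fin 3 → ℝ) : ℝ := -(u 0 * v 0) + u 1 * v 1 + u 2 * v 2

/-- Lorentzian norm. -/
def lnorm (u : Fin 3 → ℝ) : ℝ := Real.sqrt |eta u u|

lemma eta_smul_left (c : ℝ) (u v : Fin 3 → ℝ) : eta (c • u) v = c * eta u v := by
  simp [eta, Pi.smul_apply, smul_eq_mul]; ring

lemma eta_smul_smul (c d : ℝ) (u v : Fin 3 → ℝ) :
    eta (c • u) (d • v) = c * d * eta u v := by
  simp [eta, Pi.smul_apply, smul_eq_mul]; ring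

theorem stmt16
    (α T N B : ℝ → Fin 3 → ℝ) (κ τ : ℝ → ℝ)
    (hαC : ContDiff ℝ (⊤ : ℕ∞) α) (hTC : ContDiff ℝ (⊤ : ℕ∞) T) (hNC : ContDiff ℝ (⊤ : ℕ∞) N)
    (hBC : ContDiff ℝ (⊤ : ℕ∞) B) (hκC : ContDiff ℝ (⊤ : ℕ∞) κ) (hτC : ContDiff ℝ (⊤ : ℕ∞) τ)
    (hT : ∀ s, deriv α s = T s)
    (hTT : ∀ s, eta (T s) (T s) = 1)
    (hNN : ∀ s, eta (N s) (N s) = -1)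
    (hBB : ∀ s, eta (B s) (B s) = 1)
    (hTN : ∀ s, eta (T s) (N s) = 0)
    (hTB : ∀ s, eta (T s) (B s) = 0)
    (hNB : ∀ s, eta (N s) (B s) = 0)
    (hκ : ∀ s, 0 < κ s)
    (hFr1 : ∀ s, deriv T s = κ s • N s)
    (hFr2 : ∀ s, deriv N s = κ s • T s + τ s • B s)
    (hFr3 : ∀ s, deriv B s = τ s • N s)
    (ω : ℝ)
    (β : ℝ → Fin 3 → ℝ)
    (hβ : ∀ s, β s = α s + (ω - s) • T s) :
    (∀ s, deriv β s = ((ω - s) * κ s) • N s) ∧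
    (∀ I : Set ℝ, (∀ s ∈ I, 0 < ω - s) →
      ((∀ s ∈ I, eta (deriv β s) (deriv β s) < 0) ∧
       ((∃ d : Fin 3 → ℝ, d ≠ 0 ∧ ∃ c : ℝ, ∀ s ∈ I, eta ((lnorm (deriv β s))⁻¹ • deriv β s) d = c) ↔ (∃ d : Fin 3 → ℝ, d ≠ 0 ∧ ∃ c : ℝ, ∀ s ∈ I, eta (N s) d = c)))) := by
  have hβfun : β = fun s => α s + (ω - s) • T s := funext hβ
  have hderiv : ∀ s, deriv β s = ((ω - s) * κ s) • N s := by
    intro s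
    have hα' : HasDerivAt α (T s) s := by
      have := (hαC.differentiable (by simp) s).hasDerivAt
      rwa [hT s] at this
    have hT' : HasDerivAt T (κ s • N s) s := by
      have := (hTC.differentiable (by simp) s).hasDerivAt
      rwa [hFr1 s] at this
    have hc : HasDerivAt (fun x : ℝ => ω - x) (-1) s := by
      simpa using (hasDerivAt_id s).const_sub ω
    have h2 := hc.smul hT'
    have hβ' : HasDerivAt β (T s + ((ω - s) • (κ s • N s) + (-1 : ℝ) • T s)) s := by
      rw [hβfun]; exact hα'.add h2
    rw [hβ'.deriv, smul_smul, neg_one_smul]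
    abel
  refine ⟨hderiv, fun I hI => ?_⟩
  have hkey : ∀ s ∈ I, eta (deriv β s) (deriv β s) = -((ω - s) * κ s) ^ 2 := by
    intro s hs
    rw [hderiv s, eta_smul_smul, hNN s]; ring
  have hpos : ∀ s ∈ I, 0 < (ω - s) * κ s := fun s hs => mul_pos (hI s hs) (hκ s)
  constructor
  · intro s hs
    rw [hkey s hs]
    have := hpos s hs
    nlinarith
  · have hNs : ∀ s ∈ I, (lnorm (deriv β s))⁻¹ • deriv β s = N s := by
      intro s hs
      have hl : lnorm (deriv β s) = (ω - s) * κ s := by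
        rw [lnorm, hkey s hs, abs_neg, abs_sq]
        exact Real.sqrt_sq (le_of_lt (hpos s hs))
      rw [hl, hderiv s, smul_smul, inv_mul_cancel₀ (ne_of_gt (hpos s hs)), one_smul]
    constructor
    · rintro ⟨d, hd, c, hc⟩
      exact ⟨d, hd, c, fun s hs => by rw [← hNs s hs]; exact hc s hs⟩
    · rintro ⟨d, hd, c, hc⟩
      exact ⟨d, hd, c, fun s hs => by rw [hNs s hs]; exact hc s hs⟩
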